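/- arXiv:2102.11360 — 4 statements merged into one kernel-verified Lean document; each statement's English description precedes it below -/
import Mathlib

section
/- For any positive integer k, any n-node graph with at least 2k·n edges contains at least k·n distinct edge-simple alternating k-paths. -/
open SimpleGraph

/-- `AltSeq wt l` : in the edge sequence `l` (1-based positions `i+1` for list index `i`),
every even-numbered edge is strictly heavier than the adjacent odd-numbered edges. -/
def AltSeq {V : Type*} (wt : Sym2 V → ℝ) (l : List (Sym2 V)) : Prop :=
  ∀ (i : ℕ) (hi : i < l.length), i % 2 = 1 →
    wt (l.get ⟨i - 1, Nat.lt_of_le_of_lt (Nat.sub_le i 1) hi⟩) < wt (l.get ⟨i, hi⟩) ∧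
    ∀ (hi' : i + 1 < l.length), wt (l.get ⟨i + 1, hi'⟩) < wt (l.get ⟨i, hi⟩)

/-!
Write the alternation as `(-1)^i * w(e_i) < (-1)^i * w(e_(i+1))`. For an edge set `s`, let `S`
consist of one `(-1)^j * w`-maximal edge of `s` at each vertex, so `|S| ≤ n`. If `|s| > (j+1)n`
then `|s \ S| > jn`, so by induction `s \ S` carries an alternating trail with `j+1` edges; the
edge of `S` at its end vertex is new and continues the alternation. Hence every set of more than
`(k-1)n` edges carries an alternating `k`-trail. Applied to the set of edges that start no
alternating `k`-trail, this shows that at least `|E| - (k-1)n ≥ kn` edges start one, giving as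
many distinct trails.
-/

section AltSeq

variable {V : Type*} {wt : Sym2 V → ℝ}

theorem altSeq_iff {l : List (Sym2 V)} :
    AltSeq wt l ↔ ∀ i (hi : i + 1 < l.length), (-1) ^ i * wt l[i] < (-1) ^ i * wt l[i + 1] := by
  simp only [AltSeq, List.get_eq_getElem]
  constructor
  · intro h i hi
    rcases Nat.even_or_odd i with hi2 | hi2
    · simpa [hi2.neg_one_pow] using (h (i + 1) hi (by grind)).1
    · simpa [hi2.neg_one_pow] using (h i (by omega) (Nat.odd_iff.mp hi2)).2 hi
  · intro h i hi hodd
    have hodd' : Odd i := Nat.odd_iff.mpr hodd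
    refine ⟨?_, fun hi' => ?_⟩
    · have := h (i - 1) (by omega)
      have heven : Even (i - 1) := by grind
      simp only [heven.neg_one_pow, one_mul] at this
      simpa [Nat.sub_add_cancel (show 1 ≤ i by omega)] using this
    · simpa [hodd'.neg_one_pow] using h i hi'

theorem altSeq_singleton (e : Sym2 V) : AltSeq wt [e] :=
  altSeq_iff.mpr fun i hi => by simp at hi

theorem AltSeq.concat {l : List (Sym2 V)} {f : Sym2 V} {j : ℕ} (h : AltSeq wt l)
    (hl : l.length = j + 1)
    (hf : (-1) ^ j * wt (l.getLast (List.ne_nil_of_length_eq_add_one hl)) < (-1) ^ j * wt f) :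
    AltSeq wt (l.concat f) := by
  rw [altSeq_iff] at h ⊢
  intro i hi
  simp only [List.concat_eq_append, List.length_append, List.length_singleton] at hi ⊢
  rcases Nat.lt_or_ge (i + 1) l.length with hil | hil
  · simpa [List.getElem_append_left hil, List.getElem_append_left (Nat.lt_of_succ_lt hil)]
      using h i hil
  · have hij : i = j := by omega
    subst hij
    rw [List.getLast_eq_getElem] at hf
    simpa [List.getElem_append_left (show i < l.length by omega),
      List.getElem_concat_length hl.symm, hl] using hf

end AltSeq

section MaxEdges

variable {V β : Type*} [Fintype V] [LinearOrder β]

theorem exists_card_le_of_max_edge_at_vertices (g : Sym2 V → β) (s : Finset (Sym2 V))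
    (hg : Set.InjOn g s) :
    ∃ S ⊆ s, S.card ≤ Fintype.card V ∧
      ∀ v, ∀ e ∈ s, v ∈ e → ∃ f ∈ S, v ∈ f ∧ ∀ f' ∈ s, v ∈ f' → g f' ≤ g f := by
  classical
  set maxAt : V → Finset (Sym2 V) := fun v =>
    s.filter fun e => v ∈ e ∧ ∀ f ∈ s, v ∈ f → g f ≤ g e
  refine ⟨Finset.univ.biUnion maxAt, by simp [maxAt], ?_, ?_⟩
  · have hmaxAt : ∀ v ∈ Finset.univ, (maxAt v).card ≤ 1 := by
      intro v _
      refine Finset.card_le_one.mpr fun a ha b hb => ?_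
      simp only [maxAt, Finset.mem_filter] at ha hb
      exact hg ha.1 hb.1 ((hb.2.2 a ha.1 ha.2.1).antisymm (ha.2.2 b hb.1 hb.2.1))
    simpa using Finset.card_biUnion_le_card_mul _ _ _ hmaxAt
  · intro v e he hve
    obtain ⟨f, hf, hfmax⟩ := Finset.exists_max_image (s.filter (v ∈ ·)) g ⟨e, by simp [he, hve]⟩
    simp only [Finset.mem_filter] at hf hfmax
    have hfmax' : ∀ f' ∈ s, v ∈ f' → g f' ≤ g f := fun f' hf' hvf' => hfmax f' ⟨hf', hvf'⟩
    refine ⟨f, Finset.mem_biUnion.mpr ⟨v, Finset.mem_univ _, ?_⟩, hf.2, hfmax'⟩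
    exact Finset.mem_filter.mpr ⟨hf.1, hf.2, hfmax'⟩

end MaxEdges

section Trails

variable {V : Type*} [Fintype V] (Γ : SimpleGraph V) (wt : Sym2 V → ℝ)

theorem exists_isTrail_altSeq (j : ℕ) (s : Finset (Sym2 V)) (hs : ↑s ⊆ Γ.edgeSet)
    (hw : Set.InjOn wt s) (hcard : j * Fintype.card V < s.card) :
    ∃ (u v : V) (p : Γ.Walk u v), p.IsTrail ∧ p.length = j + 1 ∧ AltSeq wt p.edges ∧
      ∀ e ∈ p.edges, e ∈ s := by
  classical
  induction j generalizing s with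
  | zero =>
    obtain ⟨e, he⟩ := Finset.card_pos.mp (by omega : 0 < s.card)
    obtain ⟨⟨a, b⟩, rfl⟩ := Sym2.mk_surjective e
    have hab : Γ.Adj a b := hs he
    exact ⟨a, b, .cons hab .nil, by simp, rfl, altSeq_singleton _, by simpa using he⟩
  | succ j ih =>
    set g : Sym2 V → ℝ := fun e => (-1) ^ j * wt e
    have hg : Set.InjOn g s := fun x hx y hy h => hw hx hy (by simpa [g] using h)
    obtain ⟨S, hSs, hSn, hSmax⟩ := exists_card_le_of_max_edge_at_vertices g s hg
    have hcard' : j * Fintype.card V < (s \ S).card := by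
      have := Finset.card_sdiff_add_card_eq_card hSs
      rw [add_one_mul] at hcard
      omega
    obtain ⟨u, v, p, hp, hlen, halt, hps⟩ :=
      ih (s \ S) (subset_trans (by simp) hs) (hw.mono (by simp)) hcard'
    have hnil : ¬p.Nil := by simp [← Walk.length_eq_zero_iff, hlen]
    have hlast := p.mk_penultimate_end_mem_edges hnil
    obtain ⟨f, hfS, hvf, hfmax⟩ :=
      hSmax v _ (Finset.sdiff_subset (hps _ hlast)) (Sym2.mem_mk_right _ _)
    obtain ⟨w, rfl⟩ := Sym2.mem_iff_exists.mp hvf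
    have hfp : s(v, w) ∉ p.edges := fun h => (Finset.mem_sdiff.mp (hps _ h)).2 hfS
    have hlt : g s(p.penultimate, v) < g s(v, w) :=
      (hfmax _ (Finset.sdiff_subset (hps _ hlast)) (Sym2.mem_mk_right _ _)).lt_of_ne
        fun h => hfp (hg (Finset.sdiff_subset (hps _ hlast)) (hSs hfS) h ▸ hlast)
    have hvw : Γ.Adj v w := hs (hSs hfS)
    refine ⟨u, w, p.concat hvw, ?_, by simp [hlen], ?_, ?_⟩
    · rw [Walk.isTrail_def, Walk.edges_concat]
      exact hp.edges_nodup.concat hfp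
    · rw [Walk.edges_concat]
      exact halt.concat (by simpa using hlen) (by simpa [g] using hlt)
    · intro e he
      rw [Walk.edges_concat, List.concat_eq_append, List.mem_append, List.mem_singleton] at he
      rcases he with he | rfl
      · exact Finset.sdiff_subset (hps e he)
      · exact hSs hfS

end Trails

theorem card_le_ncard_of_forall_exists_head?_eq {α : Type*} {T : Set (List α)} (hT : T.Finite)
    {F : Finset α} (hF : ∀ e ∈ F, ∃ l ∈ T, l.head? = some e) : F.card ≤ T.ncard :=
  calc F.card = (some '' (F : Set α)).ncard := by
        rw [Set.ncard_image_of_injective _ (Option.some_injective _), Set.ncard_coe_finset]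
    _ ≤ (List.head? '' T).ncard := by
        refine Set.ncard_le_ncard ?_ (hT.image _)
        rintro _ ⟨e, he, rfl⟩
        exact hF e he
    _ ≤ T.ncard := Set.ncard_image_le hT

theorem stmt_1_general {V : Type*} [Fintype V]
    (Γ : SimpleGraph V) [DecidableRel Γ.Adj]
    (wt : Sym2 V → ℝ) (hw : Set.InjOn wt Γ.edgeSet)
    (k : ℕ)
    (hE : 2 * k * Fintype.card V ≤ Γ.edgeFinset.card) :
    k * Fintype.card V ≤
      {l : List (Sym2 V) | l.length = k ∧ l.Nodup ∧ AltSeq wt l ∧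
        ∃ (u v : V) (p : Γ.Walk u v), p.edges = l}.ncard := by
  classical
  obtain _ | K := k
  · simp
  set T := {l : List (Sym2 V) | l.length = K + 1 ∧ l.Nodup ∧ AltSeq wt l ∧
    ∃ (u v : V) (p : Γ.Walk u v), p.edges = l}
  have hT : T.Finite := (List.finite_length_eq (Sym2 V) (K + 1)).subset fun l hl => hl.1
  set F := Γ.edgeFinset.filter fun e => ∃ l ∈ T, l.head? = some e
  have hF : (Γ.edgeFinset \ F).card ≤ K * Fintype.card V := by
    by_contra! h
    have hsub : ↑(Γ.edgeFinset \ F) ⊆ Γ.edgeSet :=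
      (Finset.coe_subset.mpr Finset.sdiff_subset).trans Γ.coe_edgeFinset.subset
    obtain ⟨u, v, p, hp, hlen, halt, hpF⟩ :=
      exists_isTrail_altSeq Γ wt K _ hsub (hw.mono hsub) h
    obtain ⟨e, es, hees⟩ := List.exists_cons_of_length_eq_add_one (p.length_edges.trans hlen)
    obtain ⟨heE, heF⟩ := Finset.mem_sdiff.mp (hpF e (by simp [hees]))
    refine heF (Finset.mem_filter.mpr ⟨heE, p.edges, ?_, by simp [hees]⟩)
    exact ⟨by simpa using hlen, hp.edges_nodup, halt, u, v, p, rfl⟩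
  have hsplit := Finset.card_sdiff_add_card_eq_card (Finset.filter_subset _ Γ.edgeFinset : F ⊆ _)
  calc (K + 1) * Fintype.card V ≤ F.card := by nlinarith
    _ ≤ T.ncard :=
      card_le_ncard_of_forall_exists_head?_eq hT fun e he => (Finset.mem_filter.mp he).2

/-- Any `n`-node graph with at least `2k·n` edges contains at least `k·n` distinct
edge-simple alternating `k`-paths (paths are distinguished by their edge sequences). -/
theorem stmt_1 {V : Type*} [Fintype V] [DecidableEq V]
    (Γ : SimpleGraph V) [DecidableRel Γ.Adj]
    (wt : Sym2 V → ℝ) (hw : Set.InjOn wt Γ.edgeSet)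
    (k : ℕ) (hk : 0 < k)
    (hE : 2 * k * Fintype.card V ≤ Γ.edgeFinset.card) :
    k * Fintype.card V ≤
      {l : List (Sym2 V) | l.length = k ∧ l.Nodup ∧ AltSeq wt l ∧
        ∃ (u v : V) (p : Γ.Walk u v), p.edges = l}.ncard :=
  stmt_1_general Γ wt hw k hE
end

section
/- Let H be a graph with a strong 2k-blocking set B with |B| ≤ f·|E(H)|. Then there exists a subgraph H' of H with |E(H')| ≥ |E(H)|/2 and a strong 2k-blocking set B' ⊆ B for H' in which every edge of H' appears in fewer than 4f blocks. -/
open SimpleGraph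

def IsStrongBlockingSet {V : Type*} (G : SimpleGraph V) (wt : Sym2 V → ℝ) (k : ℕ)
    (B : Finset (Sym2 (Sym2 V))) : Prop :=
  ∀ (v : V) (C : G.Walk v v), C.IsCycle → C.length ≤ 2 * k →
    ∃ e₁ e₂ : Sym2 V, s(e₁, e₂) ∈ B ∧ e₁ ∈ C.edges ∧ e₂ ∈ C.edges ∧
      ∀ e ∈ C.edges, e ≠ e₁ → wt e < wt e₁

open Classical in
noncomputable def blockCount {V : Type*} (B : Finset (Sym2 (Sym2 V))) (e : Sym2 V) : ℕ :=
  (B.filter (fun b => e ∈ b)).card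

/-!
Delete every edge of `H` lying in at least `4f` blocks and keep `B' = B`. Counting incidences
between edges and blocks, each block contains at most two edges, so at most `2|B| ≤ 2f·|E(H)|`
incidences exist and hence at most `|E(H)|/2` edges are deleted. A short cycle of the subgraph
is a short cycle of `H`, so it is still blocked by a pair of `B` whose edges lie on that cycle.
-/

open Finset

theorem IsStrongBlockingSet.mono {V : Type*} {G G' : SimpleGraph V} {wt : Sym2 V → ℝ} {k : ℕ}
    {B : Finset (Sym2 (Sym2 V))} (hB : IsStrongBlockingSet G wt k B) (hle : G' ≤ G) :
    IsStrongBlockingSet G' wt k B := by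
  intro v C hC hlen
  have hsub : ∀ e ∈ C.edges, e ∈ G.edgeSet := fun e he =>
    edgeSet_mono hle (C.edges_subset_edgeSet he)
  simpa only [Walk.edges_transfer] using
    hB v (C.transfer G hsub) (hC.transfer hsub) (by rwa [Walk.length_transfer])

theorem Sym2.card_filter_mem_le_two {α : Type*} [DecidableEq α] (s : Finset α) (z : Sym2 α) :
    #{a ∈ s | a ∈ z} ≤ 2 := by
  calc #{a ∈ s | a ∈ z} ≤ #z.toFinset :=
        card_le_card fun a ha => Sym2.mem_toFinset.2 (mem_filter.1 ha).2
    _ ≤ 2 := by rw [Sym2.card_toFinset]; split_ifs <;> omega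

theorem card_mul_le_two_mul_card_of_le_blockCount {V : Type*}
    (B : Finset (Sym2 (Sym2 V))) (S : Finset (Sym2 V)) {m : ℕ}
    (hm : ∀ e ∈ S, m ≤ blockCount B e) : #S * m ≤ 2 * #B := by
  classical
  have h := card_nsmul_le_card_nsmul (R := ℕ)
    (r := fun (e : Sym2 V) (b : Sym2 (Sym2 V)) => e ∈ b) (s := S) (t := B) (m := m) (n := 2)
    (fun e he => (hm e he).trans_eq (by unfold blockCount; congr))
    (fun b _ => Sym2.card_filter_mem_le_two S b)
  simpa only [smul_eq_mul, mul_comm _ 2] using h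

theorem stmt_6_general {V : Type*} [Fintype V] [DecidableEq V]
    (H : SimpleGraph V) [DecidableRel H.Adj]
    (wt : Sym2 V → ℝ)
    (k f : ℕ) (hf : 0 < f)
    (B : Finset (Sym2 (Sym2 V)))
    (hB : IsStrongBlockingSet H wt k B)
    (hBcard : B.card ≤ f * H.edgeFinset.card) :
    ∃ (H' : SimpleGraph V) (B' : Finset (Sym2 (Sym2 V))),
      H' ≤ H ∧
      H.edgeFinset.card ≤ 2 * H'.edgeSet.ncard ∧
      B' ⊆ B ∧
      IsStrongBlockingSet H' wt k B' ∧
      ∀ e ∈ H'.edgeSet, blockCount B' e < 4 * f := by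
  classical
  set heavy : Finset (Sym2 V) := {e ∈ H.edgeFinset | 4 * f ≤ blockCount B e}
  have h_heavy : #heavy * (4 * f) ≤ 2 * #B :=
    card_mul_le_two_mul_card_of_le_blockCount B heavy fun e he => (mem_filter.1 he).2
  have h_half : 2 * #heavy ≤ #H.edgeFinset :=
    Nat.le_of_mul_le_mul_right (by nlinarith) (show 0 < 2 * f by omega)
  have h_ncard : (H.deleteEdges heavy).edgeSet.ncard = #H.edgeFinset - #heavy := by
    rw [edgeSet_deleteEdges, ← coe_edgeFinset, ← coe_sdiff, Set.ncard_coe_finset,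
      card_sdiff_of_subset (filter_subset _ _)]
  refine ⟨H.deleteEdges heavy, B, H.deleteEdges_le _, by omega, subset_rfl,
    hB.mono (H.deleteEdges_le _), fun e he => ?_⟩
  rw [edgeSet_deleteEdges] at he
  exact not_le.1 fun h => he.2 (mem_filter.2 ⟨(mem_edgeFinset).2 he.1, h⟩)

/-- If `H` has a strong `2k`-blocking set `B` with `|B| ≤ f·|E(H)|`, then some subgraph
`H'` of `H` retaining at least half the edges has a strong `2k`-blocking set `B' ⊆ B` in
which every edge of `H'` appears in fewer than `4f` blocks. -/
theorem stmt_6 {V : Type*} [Fintype V] [DecidableEq V]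
    (H : SimpleGraph V) [DecidableRel H.Adj]
    (wt : Sym2 V → ℝ) (hw : Set.InjOn wt H.edgeSet)
    (k f : ℕ) (hk : 0 < k) (hf : 0 < f)
    (B : Finset (Sym2 (Sym2 V)))
    (hB : IsStrongBlockingSet H wt k B)
    (hBcard : B.card ≤ f * H.edgeFinset.card) :
    ∃ (H' : SimpleGraph V) (B' : Finset (Sym2 (Sym2 V))),
      H' ≤ H ∧
      H.edgeFinset.card ≤ 2 * H'.edgeSet.ncard ∧
      B' ⊆ B ∧
      IsStrongBlockingSet H' wt k B' ∧
      ∀ e ∈ H'.edgeSet, blockCount B' e < 4 * f :=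
  stmt_6_general H wt k f hf B hB hBcard
end

section
/- The graph H output by the fault-tolerant greedy algorithm is an f-edge-fault-tolerant (2k-1)-spanner of G: for every F ⊆ E(G) with |F| ≤ f and every pair of vertices u, v, d_{H∖F}(u,v) ≤ (2k-1)·d_{G∖F}(u,v). -/
/-!
Every edge `s(x, y)` of `G ∖ F` is `(2k-1)`-stretched in `H ∖ F`. Either the algorithm kept it,
and then it survives in `H ∖ F`; or it was rejected at a moment when the partial spanner `S ⊆ H`
admitted no fault set of size `≤ f` stretching `x, y` beyond `(2k-1)·w(x, y)`, in particular not
`F`, so `d_{H∖F}(x, y) ≤ d_{S∖F}(x, y) ≤ (2k-1)·w(x, y)`. Concatenating these bounds along any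
walk of `G ∖ F` gives the spanner inequality.
-/

open SimpleGraph
open scoped NNReal ENNReal

/-- Weighted shortest-path distance (`⊤` if there is no walk). -/
noncomputable def wdist {V : Type*} (G : SimpleGraph V) (wt : Sym2 V → ℝ≥0) (u v : V) :
    ℝ≥0∞ :=
  ⨅ (p : G.Walk u v), (p.edges.map (fun e => (wt e : ℝ≥0∞))).sum

open Classical in
/-- The fault-tolerant greedy algorithm: process the edges of the list in order, starting
from the partial spanner edge set `S`, adding an edge `e = s(x,y)` iff some fault set `F`
of at most `f` edges makes the current distance from `x` to `y` exceed `(2k-1)·wt e`. -/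
noncomputable def greedyEFT {V : Type*} (wt : Sym2 V → ℝ≥0) (f k : ℕ) :
    List (Sym2 V) → Set (Sym2 V) → Set (Sym2 V)
  | [], S => S
  | e :: L, S =>
    greedyEFT wt f k L
      (if ∃ F : Finset (Sym2 V), F.card ≤ f ∧
            ∀ x y : V, e = s(x, y) →
              ((2 * k - 1 : ℕ) : ℝ≥0∞) * (wt e : ℝ≥0∞) <
                wdist (SimpleGraph.fromEdgeSet (S \ (F : Set (Sym2 V)))) wt x y
        then insert e S else S)

namespace SimpleGraph

variable {V : Type*} {G H : SimpleGraph V} (wt : Sym2 V → ℝ≥0)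

noncomputable def walkWeight {u v : V} (p : G.Walk u v) : ℝ≥0∞ :=
  (p.edges.map (fun e => (wt e : ℝ≥0∞))).sum

theorem wdist_eq_iInf_walkWeight (u v : V) : wdist G wt u v = ⨅ p : G.Walk u v, walkWeight wt p :=
  rfl

theorem wdist_le_walkWeight {u v : V} (p : G.Walk u v) : wdist G wt u v ≤ walkWeight wt p :=
  iInf_le _ p

@[simp]
theorem walkWeight_nil {u : V} : walkWeight wt (Walk.nil : G.Walk u u) = 0 := rfl

@[simp]
theorem walkWeight_cons {u v w : V} (h : G.Adj u v) (p : G.Walk v w) :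
    walkWeight wt (Walk.cons h p) = wt s(u, v) + walkWeight wt p := by
  simp [walkWeight]

@[simp]
theorem walkWeight_append {u v w : V} (p : G.Walk u v) (q : G.Walk v w) :
    walkWeight wt (p.append q) = walkWeight wt p + walkWeight wt q := by
  simp [walkWeight, Walk.edges_append]

@[simp]
theorem walkWeight_reverse {u v : V} (p : G.Walk u v) :
    walkWeight wt p.reverse = walkWeight wt p := by
  simp [walkWeight, List.sum_reverse]

theorem wdist_le_of_adj {u v : V} (h : G.Adj u v) : wdist G wt u v ≤ wt s(u, v) := by
  simpa using wdist_le_walkWeight wt (Walk.cons h Walk.nil)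

theorem wdist_comm (u v : V) : wdist G wt u v = wdist G wt v u := by
  refine le_antisymm (le_iInf fun p => ?_) (le_iInf fun p => ?_) <;>
    exact (wdist_le_walkWeight wt p.reverse).trans_eq (walkWeight_reverse wt p)

theorem wdist_anti (h : G ≤ H) (u v : V) : wdist H wt u v ≤ wdist G wt u v := by
  refine le_iInf fun p => ?_
  have hp : ∀ e ∈ p.edges, e ∈ H.edgeSet := fun e he =>
    edgeSet_mono h (p.edges_subset_edgeSet he)
  simpa [walkWeight, Walk.edges_transfer] using wdist_le_walkWeight wt (p.transfer H hp)

theorem wdist_triangle (u v w : V) : wdist G wt u w ≤ wdist G wt u v + wdist G wt v w := by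
  simp only [wdist_eq_iInf_walkWeight, ENNReal.iInf_add, ENNReal.add_iInf]
  exact le_iInf₂ fun q p =>
    (wdist_le_walkWeight wt (p.append q)).trans_eq (walkWeight_append wt p q)

variable {wt} {c : ℝ≥0∞}

theorem wdist_le_mul_walkWeight_of_forall_adj
    (hc : ∀ x y, G.Adj x y → wdist H wt x y ≤ c * wt s(x, y)) {u v : V} (p : G.Walk u v) :
    wdist H wt u v ≤ c * walkWeight wt p := by
  induction p with
  | nil => simpa using wdist_le_walkWeight wt (Walk.nil : H.Walk _ _)
  | @cons x y z h q ih =>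
    calc wdist H wt x z ≤ wdist H wt x y + wdist H wt y z := wdist_triangle wt x y z
      _ ≤ c * wt s(x, y) + c * walkWeight wt q := add_le_add (hc x y h) ih
      _ = c * walkWeight wt (Walk.cons h q) := by rw [walkWeight_cons, mul_add]

theorem wdist_le_mul_wdist_of_forall_adj (hc0 : c ≠ 0) (hctop : c ≠ ⊤)
    (hc : ∀ x y, G.Adj x y → wdist H wt x y ≤ c * wt s(x, y)) (u v : V) :
    wdist H wt u v ≤ c * wdist G wt u v := by
  rw [wdist_eq_iInf_walkWeight wt u v (G := G), ENNReal.mul_iInf_of_ne hc0 hctop]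
  exact le_iInf (wdist_le_mul_walkWeight_of_forall_adj hc)

end SimpleGraph

section Greedy

variable {V : Type*} (wt : Sym2 V → ℝ≥0) (f k : ℕ)

/-- The test on which `greedyEFT` adds the edge `e` to the partial spanner `S`. -/
def IsStretchedByFault (S : Set (Sym2 V)) (e : Sym2 V) : Prop :=
  ∃ F : Finset (Sym2 V), F.card ≤ f ∧
    ∀ x y : V, e = s(x, y) →
      ((2 * k - 1 : ℕ) : ℝ≥0∞) * (wt e : ℝ≥0∞) <
        wdist (fromEdgeSet (S \ (F : Set (Sym2 V)))) wt x y

open Classical in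
theorem greedyEFT_cons (e : Sym2 V) (L : List (Sym2 V)) (S : Set (Sym2 V)) :
    greedyEFT wt f k (e :: L) S =
      greedyEFT wt f k L (if IsStretchedByFault wt f k S e then insert e S else S) :=
  greedyEFT.eq_2 ..

theorem subset_greedyEFT (L : List (Sym2 V)) (S : Set (Sym2 V)) : S ⊆ greedyEFT wt f k L S := by
  induction L generalizing S with
  | nil => exact subset_rfl
  | cons e L ih =>
    rw [greedyEFT_cons]
    refine subset_trans ?_ (ih _)
    split_ifs
    exacts [Set.subset_insert e S, subset_rfl]

theorem mem_greedyEFT_or_exists_not_isStretchedByFault {L : List (Sym2 V)} {e : Sym2 V}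
    (he : e ∈ L) (S : Set (Sym2 V)) :
    e ∈ greedyEFT wt f k L S ∨
      ∃ S' ⊆ greedyEFT wt f k L S, ¬ IsStretchedByFault wt f k S' e := by
  induction L generalizing S with
  | nil => cases he
  | cons a L ih =>
    rw [greedyEFT_cons]
    rcases List.mem_cons.mp he with rfl | he
    · by_cases hs : IsStretchedByFault wt f k S e
      · rw [if_pos hs]
        exact .inl (subset_greedyEFT wt f k L _ (Set.mem_insert e S))
      · rw [if_neg hs]
        exact .inr ⟨S, subset_greedyEFT wt f k L S, hs⟩
    · exact ih he _

variable {wt f k}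

theorem wdist_le_of_not_isStretchedByFault {S : Set (Sym2 V)} {x y : V}
    (hs : ¬ IsStretchedByFault wt f k S s(x, y)) {F : Finset (Sym2 V)} (hF : F.card ≤ f) :
    wdist (fromEdgeSet (S \ (F : Set (Sym2 V)))) wt x y ≤
      ((2 * k - 1 : ℕ) : ℝ≥0∞) * wt s(x, y) := by
  simp only [IsStretchedByFault, not_exists, not_and, not_forall, not_lt] at hs
  obtain ⟨x', y', hxy, hle⟩ := hs F hF
  rcases Sym2.eq_iff.mp hxy with ⟨rfl, rfl⟩ | ⟨rfl, rfl⟩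
  · exact hle
  · rwa [wdist_comm]

theorem wdist_deleteEdges_greedyEFT_le (hk : 0 < k) {L : List (Sym2 V)} (S : Set (Sym2 V))
    {F : Finset (Sym2 V)} (hF : F.card ≤ f) {x y : V} (hxy : x ≠ y) (he : s(x, y) ∈ L)
    (heF : s(x, y) ∉ (F : Set (Sym2 V))) :
    wdist ((fromEdgeSet (greedyEFT wt f k L S)).deleteEdges F) wt x y ≤
      ((2 * k - 1 : ℕ) : ℝ≥0∞) * wt s(x, y) := by
  rw [deleteEdges_fromEdgeSet]
  rcases mem_greedyEFT_or_exists_not_isStretchedByFault wt f k he S with hmem | ⟨S', hS', hs⟩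
  · have hadj : (fromEdgeSet (greedyEFT wt f k L S \ F)).Adj x y := by
      rw [fromEdgeSet_adj]
      exact ⟨⟨hmem, heF⟩, hxy⟩
    have hk' : (1 : ℝ≥0∞) ≤ ((2 * k - 1 : ℕ) : ℝ≥0∞) := by
      exact_mod_cast (by omega : 1 ≤ 2 * k - 1)
    exact (wdist_le_of_adj wt hadj).trans (le_mul_of_one_le_left (by positivity) hk')
  · calc _ ≤ wdist (fromEdgeSet (S' \ (F : Set (Sym2 V)))) wt x y :=
          wdist_anti wt (fromEdgeSet_mono (Set.sdiff_subset_sdiff_left hS')) x y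
      _ ≤ _ := wdist_le_of_not_isStretchedByFault hs hF

end Greedy

theorem stmt_12_general {V : Type*}
    (G : SimpleGraph V) (wt : Sym2 V → ℝ≥0)
    (f k : ℕ) (hk : 0 < k)
    (L : List (Sym2 V)) (hL : ∀ e, e ∈ L ↔ e ∈ G.edgeSet)
    (H : SimpleGraph V) (hH : H = SimpleGraph.fromEdgeSet (greedyEFT wt f k L ∅)) :
    ∀ F : Finset (Sym2 V), (F : Set (Sym2 V)) ⊆ G.edgeSet → F.card ≤ f →
      ∀ u v : V,
        wdist (H.deleteEdges (F : Set (Sym2 V))) wt u v ≤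
          ((2 * k - 1 : ℕ) : ℝ≥0∞) * wdist (G.deleteEdges (F : Set (Sym2 V))) wt u v := by
  intro F _ hF
  subst hH
  have hc0 : ((2 * k - 1 : ℕ) : ℝ≥0∞) ≠ 0 := by exact_mod_cast (by omega : 2 * k - 1 ≠ 0)
  refine wdist_le_mul_wdist_of_forall_adj hc0 (ENNReal.natCast_ne_top _) fun x y hxy => ?_
  rw [deleteEdges_adj] at hxy
  exact wdist_deleteEdges_greedyEFT_le hk ∅ hF hxy.1.ne ((hL _).2 hxy.1) hxy.2

/-- The graph `H` output by the FT-greedy algorithm is an `f`-edge-fault-tolerant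
`(2k-1)`-spanner of `G`: for every fault set `F ⊆ E(G)` with `|F| ≤ f` and all vertices
`u, v`, `d_{H∖F}(u,v) ≤ (2k-1)·d_{G∖F}(u,v)`. -/
theorem stmt_12 {V : Type*} [Fintype V] [DecidableEq V]
    (G : SimpleGraph V) (wt : Sym2 V → ℝ≥0)
    (f k : ℕ) (hf : 0 < f) (hk : 0 < k)
    (L : List (Sym2 V)) (hL : ∀ e, e ∈ L ↔ e ∈ G.edgeSet) (hLnd : L.Nodup)
    (hsort : L.Pairwise (fun a b => wt a ≤ wt b))
    (H : SimpleGraph V) (hH : H = SimpleGraph.fromEdgeSet (greedyEFT wt f k L ∅)) :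
    ∀ F : Finset (Sym2 V), (F : Set (Sym2 V)) ⊆ G.edgeSet → F.card ≤ f →
      ∀ u v : V,
        wdist (H.deleteEdges (F : Set (Sym2 V))) wt u v ≤
          ((2 * k - 1 : ℕ) : ℝ≥0∞) * wdist (G.deleteEdges (F : Set (Sym2 V))) wt u v :=
  stmt_12_general G wt f k hk L hL H hH
end

section
/- In the Ree-Tits octagon incidence graph construction: if R is a bipartite graph of girth greater than 15, and G is obtained from R by replacing each vertex v with a set of copies and each edge (u,v) with all edges between copies of u and copies of v, then for any edge (u_i, v_j) of G, letting F be the set of all other copies of the edge (u,v), the graph G∖F contains no cycle of length at most 15 through the edge (u_i, v_j). -/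
/-! The projection `Sigma.fst` is a graph homomorphism onto `R`, and `s(⟨u, i⟩, ⟨v, j⟩)` is the
only surviving edge over `s(u, v)`. Cutting a cycle at that edge leaves a walk from `⟨v, j⟩` to
`⟨u, i⟩` that avoids it, so its projection avoids `s(u, v)`; closing the bypass of that projection
with `s(u, v)` gives a cycle of `R` no longer than the original cycle. -/

open SimpleGraph

namespace SimpleGraph.Walk

variable {V W : Type*} {G : SimpleGraph V} {H : SimpleGraph W}

lemma IsCycle.eq_snd_or_eq_penultimate_of_mem_edges {a b : V} {c : G.Walk a a}
    (hc : c.IsCycle) (he : s(a, b) ∈ c.edges) : b = c.snd ∨ b = c.penultimate := by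
  cases c with
  | nil => exact absurd hc not_isCycle_nil
  | cons h p =>
    rw [cons_isCycle_iff] at hc
    rcases List.mem_cons.mp he with he | he
    · left
      rw [snd_cons]
      exact Sym2.congr_right.mp he
    · right
      have hp : ¬ p.Nil := edges_eq_nil.not.mp (List.ne_nil_of_mem he)
      rw [penultimate_cons_of_not_nil _ _ hp]
      exact hc.1.eq_penultimate_of_mem_edges he

lemma IsCycle.exists_cons_of_mem_edges {x a b : V} {c : G.Walk x x} (hc : c.IsCycle)
    (he : s(a, b) ∈ c.edges) :
    ∃ (h : G.Adj a b) (p : G.Walk b a), (cons h p).IsCycle ∧ p.length + 1 = c.length := by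
  classical
  have ha : a ∈ c.support := c.fst_mem_support_of_mem_edges he
  suffices key : ∀ d : G.Walk a a, d.IsCycle → d.snd = b →
      ∃ (h : G.Adj a b) (p : G.Walk b a), (cons h p).IsCycle ∧ p.length + 1 = d.length by
    have hd : (c.rotate a ha).IsCycle := hc.rotate ha
    have hde : s(a, b) ∈ (c.rotate a ha).edges := (c.rotate_edges a ha).mem_iff.mpr he
    rcases hd.eq_snd_or_eq_penultimate_of_mem_edges hde with hb | hb
    · simpa using key _ hd hb.symm
    · simpa using key _ hd.reverse (by rw [snd_reverse, hb])
  rintro d hd rfl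
  refine ⟨d.adj_snd hd.not_nil, d.tail, ?_, d.length_tail_add_one hd.not_nil⟩
  rwa [cons_tail_eq _ hd.not_nil]

lemma lt_length_add_one_of_notMem_edges {n : ℕ}
    (hgirth : ∀ (a : W) (C : H.Walk a a), C.IsCycle → n < C.length)
    {u v : W} (huv : H.Adj u v) (p : H.Walk v u) (hp : s(u, v) ∉ p.edges) :
    n < p.length + 1 := by
  classical
  exact calc n < (cons huv p.bypass).length :=
        hgirth u _ ((cons_isCycle_iff _ huv).mpr
          ⟨p.bypass_isPath, fun h => hp (p.edges_bypass_subset_edges h)⟩)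
    _ ≤ p.length + 1 := Nat.succ_le_succ p.length_bypass_le_length

lemma notMem_edges_map {f : G →g H} {e : Sym2 V} {e' : Sym2 W}
    (hlift : ∀ d ∈ G.edgeSet, d.map f = e' → d = e) {x y : V} {p : G.Walk x y}
    (hp : e ∉ p.edges) : e' ∉ (p.map f).edges := by
  rw [edges_map]
  intro hmem
  obtain ⟨d, hd, hde⟩ := List.mem_map.mp hmem
  exact hp (hlift d (p.edges_subset_edgeSet hd) hde ▸ hd)

lemma IsCycle.lt_length_of_unique_lift (f : G →g H) {n : ℕ}
    (hgirth : ∀ (a : W) (C : H.Walk a a), C.IsCycle → n < C.length) {a b : V}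
    (hlift : ∀ d ∈ G.edgeSet, d.map f = s(f a, f b) → d = s(a, b))
    {x : V} {c : G.Walk x x} (hc : c.IsCycle) (he : s(a, b) ∈ c.edges) : n < c.length := by
  obtain ⟨h, p, hcyc, hlen⟩ := hc.exists_cons_of_mem_edges he
  have hp : s(a, b) ∉ p.edges := ((cons_isCycle_iff p h).mp hcyc).2
  have := lt_length_add_one_of_notMem_edges hgirth (f.map_adj h) (p.map f)
    (notMem_edges_map hlift hp)
  rw [length_map] at this
  omega

end SimpleGraph.Walk

theorem stmt_14_general {A : Type*} (R : SimpleGraph A)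
    (hgirth : ∀ (a : A) (C : R.Walk a a), C.IsCycle → 15 < C.length)
    (ι : A → Type*)
    (u v : A) (i : ι u) (j : ι v) :
    ∀ (x : Σ a, ι a)
      (C : ((R.comap (Sigma.fst : (Σ a, ι a) → A)).deleteEdges
          ({e : Sym2 (Σ a, ι a) | Sym2.map Sigma.fst e = s(u, v)} \
            {s((⟨u, i⟩ : Σ a, ι a), (⟨v, j⟩ : Σ a, ι a))})).Walk x x),
      C.IsCycle → s((⟨u, i⟩ : Σ a, ι a), (⟨v, j⟩ : Σ a, ι a)) ∈ C.edges →
      15 < C.length := by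
  intro x C hC he
  refine hC.lt_length_of_unique_lift ((Hom.comap Sigma.fst R).comp (Hom.ofLE (deleteEdges_le _)))
    hgirth (fun d hd hdu => ?_) he
  rw [edgeSet_deleteEdges] at hd
  exact by_contra fun hne => hd.2 ⟨hdu, hne⟩

/-- Blow-up construction: if `R` is bipartite with girth `> 15` and `G` is the blow-up of
`R` (vertex `a` replaced by the copies `ι a`, with all edges between copies of adjacent
vertices), then after deleting all copies of the edge `(u,v)` except `(u_i, v_j)`, no
cycle of length at most `15` passes through the edge `(u_i, v_j)`. -/
theorem stmt_14 {A : Type*} (R : SimpleGraph A) (hbip : R.Colorable 2)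
    (hgirth : ∀ (a : A) (C : R.Walk a a), C.IsCycle → 15 < C.length)
    (ι : A → Type*) (hne : ∀ a, Nonempty (ι a))
    (u v : A) (huv : R.Adj u v) (i : ι u) (j : ι v) :
    ∀ (x : Σ a, ι a)
      (C : ((R.comap (Sigma.fst : (Σ a, ι a) → A)).deleteEdges
          ({e : Sym2 (Σ a, ι a) | Sym2.map Sigma.fst e = s(u, v)} \
            {s((⟨u, i⟩ : Σ a, ι a), (⟨v, j⟩ : Σ a, ι a))})).Walk x x),
      C.IsCycle → s((⟨u, i⟩ : Σ a, ι a), (⟨v, j⟩ : Σ a, ι a)) ∈ C.edges →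
      15 < C.length :=
  stmt_14_general R hgirth ι u v i j
end
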